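/- arXiv:2102.12757 — 10 statements merged into one kernel-verified Lean document; each statement's English description precedes it below -/
import Mathlib

section
/- Let L ≥ 1, and for s,k ∈ {1,…,L} let m_s > 0 be masses, n_s > 0 number densities, u_s ∈ ℝ³ velocities, and λ_{sk} > 0 symmetric collision kernels (λ_{sk} = λ_{ks}). Set ν_{sk} = λ_{sk} n_k, ν_s = Σ_{k=1}^L ν_{sk}, a_{sk} = m_k/(m_s+m_k), u_{sk} = (1−a_{sk}) u_s + a_{sk} u_k, ξ^{sk} = λ_{sk} m_s m_k n_s n_k/(m_s+m_k) − δ_{sk} Σ_{r=1}^L λ_{sr} m_s m_r n_s n_r/(m_s+m_r), and u^s = u_s + (1/(m_s n_s ν_s)) Σ_{k=1}^L ξ^{sk} u_k. Then for every s, the leading-order velocity discrepancy between the AAP and BBGSP models vanishes: 𝓔_u := Σ_{k=1}^L ν_{sk} (u^s − u_{sk}) = 0 in ℝ³. -/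
open scoped BigOperators
open RealInnerProductSpace

theorem aap_bbgsp_velocity_discrepancy_vanishes
    (L : ℕ) (hL : 1 ≤ L)
    (m n : Fin L → ℝ) (u : Fin L → EuclideanSpace ℝ (Fin 3))
    (lam : Fin L → Fin L → ℝ)
    (hm : ∀ s, 0 < m s) (hn : ∀ s, 0 < n s)
    (hlam : ∀ s k, 0 < lam s k) (hlamsym : ∀ s k, lam s k = lam k s)
    (ν : Fin L → Fin L → ℝ) (hν : ∀ s k, ν s k = lam s k * n k)
    (νs : Fin L → ℝ) (hνs : ∀ s, νs s = ∑ k, ν s k)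
    (a : Fin L → Fin L → ℝ) (ha : ∀ s k, a s k = m k / (m s + m k))
    (usk : Fin L → Fin L → EuclideanSpace ℝ (Fin 3))
    (husk : ∀ s k, usk s k = (1 - a s k) • u s + a s k • u k)
    (ξ : Fin L → Fin L → ℝ)
    (hξ : ∀ s k, ξ s k =
      lam s k * m s * m k * n s * n k / (m s + m k)
        - (if s = k then ∑ r, lam s r * m s * m r * n s * n r / (m s + m r) else 0))
    (uAAP : Fin L → EuclideanSpace ℝ (Fin 3))
    (huAAP : ∀ s, uAAP s = u s + (1 / (m s * n s * νs s)) • ∑ k, ξ s k • u k) :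
    ∀ s, ∑ k, ν s k • (uAAP s - usk s k) = 0 := by
  intro s
  have hνpos : ∀ k, 0 < ν s k := fun k => by
    rw [hν]; exact mul_pos (hlam s k) (hn k)
  have hN : 0 < νs s := by
    rw [hνs]
    exact Finset.sum_pos (fun k _ => hνpos k) ⟨⟨0, hL⟩, Finset.mem_univ _⟩
  have hms := (hm s).ne'
  have hns := (hn s).ne'
  have hNne := hN.ne'
  set b : Fin L → ℝ := fun k => ν s k * a s k with hb
  have hmsum : ∀ k : Fin L, m s + m k ≠ 0 := fun k => (add_pos (hm s) (hm k)).ne'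
  have h1 : ∀ k : Fin L, lam s k * m s * m k * n s * n k / (m s + m k)
      = (m s * n s) * b k := by
    intro k
    simp only [hb, hν, ha]
    field_simp
  have hξb : ∀ k, ξ s k = (m s * n s) * (b k - if s = k then ∑ r, b r else 0) := by
    intro k
    rw [hξ, h1 k]
    by_cases h : s = k
    · subst h
      rw [if_pos rfl, if_pos rfl, mul_sub]
      congr 1
      rw [Finset.mul_sum]
      exact Finset.sum_congr rfl fun r _ => h1 r
    · simp [h]
  have hsum : ∑ k, ξ s k • u k
      = (m s * n s) • ((∑ k, b k • u k) - (∑ k, b k) • u s) := by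
    have hpick : ∑ k, ((m s * n s) * (if s = k then ∑ r, b r else 0)) • u k
        = (m s * n s) • (∑ k, b k) • u s := by
      rw [Finset.sum_eq_single s]
      · simp [mul_smul]
      · intro k _ hk; simp [Ne.symm hk]
      · simp
    calc ∑ k, ξ s k • u k
        = ∑ k, (((m s * n s) * b k) • u k
            - ((m s * n s) * (if s = k then ∑ r, b r else 0)) • u k) := by
          refine Finset.sum_congr rfl fun k _ => ?_
          rw [hξb k, mul_sub, sub_smul]
      _ = (m s * n s) • ((∑ k, b k • u k) - (∑ k, b k) • u s) := by
          rw [Finset.sum_sub_distrib, hpick, smul_sub, Finset.smul_sum]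
          simp [mul_smul]
  have key : uAAP s = u s + (νs s)⁻¹ • ((∑ k, b k • u k) - (∑ k, b k) • u s) := by
    rw [huAAP, hsum, smul_smul]
    congr 2
    field_simp
  have husum : ∑ k, ν s k • usk s k
      = (∑ k, (ν s k - b k)) • u s + ∑ k, b k • u k := by
    rw [Finset.sum_smul, ← Finset.sum_add_distrib]
    refine Finset.sum_congr rfl fun k _ => ?_
    rw [husk, smul_add, smul_smul, smul_smul, mul_sub, mul_one]
  have hsplit : ∑ k, ν s k • (uAAP s - usk s k)
      = νs s • uAAP s - ∑ k, ν s k • usk s k := by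
    simp only [smul_sub]
    rw [Finset.sum_sub_distrib, ← Finset.sum_smul, ← hνs]
  rw [hsplit, husum, key, smul_add, smul_smul, mul_inv_cancel₀ hNne, one_smul,
    Finset.sum_sub_distrib, sub_smul, ← hνs]
  abel
end

section
/- Let L ≥ 1, K_B > 0, and for s,k ∈ {1,…,L} let m_s > 0, n_s > 0, u_s ∈ ℝ³, T_s ∈ ℝ, and λ_{sk} > 0 with λ_{sk} = λ_{ks}. Set ν_{sk} = λ_{sk} n_k, ν_s = Σ_k ν_{sk}, a_{sk} = m_k/(m_s+m_k), b_{sk} = 2 a_{sk} m_s/(m_s+m_k), γ_{sk} = (m_s a_{sk}/3)(2 m_k/(m_s+m_k) − a_{sk}), T_{sk} = (1−b_{sk}) T_s + b_{sk} T_k + (γ_{sk}/K_B)|u_s−u_k|². Define the AAP auxiliary parameters u^s = u_s + (1/(m_s n_s ν_s)) Σ_k ξ^{sk} u_k with ξ^{sk} = λ_{sk} m_s m_k n_s n_k/(m_s+m_k) − δ_{sk} Σ_r λ_{sr} m_s m_r n_s n_r/(m_s+m_r), and T^s = T_s − (m_s/(3K_B))(|u^s|²−|u_s|²) + (2/(3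 n_s K_B ν_s)) Σ_k γ^{sk} T_k + (2/(3 n_s K_B ν_s)) Σ_k λ_{sk} (m_s m_k n_s n_k/(m_s+m_k)²)(m_s u_s + m_k u_k)·(u_k−u_s), where γ^{sk} = 3K_B λ_{sk} m_s m_k n_s n_k/(m_s+m_k)² − δ_{sk} Σ_r 3K_B λ_{sr} m_s m_r n_s n_r/(m_s+m_r)². Then for every s, 𝓔_T := Σ_{k=1}^L ν_{sk}(T^s − T_{sk}) = (m_s/(3K_B)) Σ_{k=1}^L ν_{sk} a_{sk}² |u_s−u_k|² − (m_s/(3K_B ν_s)) |Σ_{r=1}^L ν_{sr} a_{sr}(u_r−u_s)|². -/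
open scoped BigOperators
open RealInnerProductSpace

set_option maxHeartbeats 1600000

theorem aap_bbgsp_temperature_discrepancy
    (L : ℕ) (hL : 1 ≤ L) (KB : ℝ) (hKB : 0 < KB)
    (m n T : Fin L → ℝ) (u : Fin L → EuclideanSpace ℝ (Fin 3))
    (lam : Fin L → Fin L → ℝ)
    (hm : ∀ s, 0 < m s) (hn : ∀ s, 0 < n s)
    (hlam : ∀ s k, 0 < lam s k) (hlamsym : ∀ s k, lam s k = lam k s)
    (ν : Fin L → Fin L → ℝ) (hν : ∀ s k, ν s k = lam s k * n k)
    (νs : Fin L → ℝ) (hνs : ∀ s, νs s = ∑ k, ν s k)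
    (a b γ : Fin L → Fin L → ℝ)
    (ha : ∀ s k, a s k = m k / (m s + m k))
    (hb : ∀ s k, b s k = 2 * a s k * m s / (m s + m k))
    (hγ : ∀ s k, γ s k = m s * a s k / 3 * (2 * m k / (m s + m k) - a s k))
    (Tsk : Fin L → Fin L → ℝ)
    (hTsk : ∀ s k, Tsk s k = (1 - b s k) * T s + b s k * T k + γ s k / KB * ‖u s - u k‖ ^ 2)
    (ξ : Fin L → Fin L → ℝ)
    (hξ : ∀ s k, ξ s k = lam s k * m s * m k * n s * n k / (m s + m k)
      - (if s = k then ∑ r, lam s r * m s * m r * n s * n r / (m s + m r) else 0))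
    (uAAP : Fin L → EuclideanSpace ℝ (Fin 3))
    (huAAP : ∀ s, uAAP s = u s + (1 / (m s * n s * νs s)) • ∑ k, ξ s k • u k)
    (γA : Fin L → Fin L → ℝ)
    (hγA : ∀ s k, γA s k = 3 * KB * lam s k * m s * m k * n s * n k / (m s + m k) ^ 2
      - (if s = k then ∑ r, 3 * KB * lam s r * m s * m r * n s * n r / (m s + m r) ^ 2 else 0))
    (TAAP : Fin L → ℝ)
    (hTAAP : ∀ s, TAAP s = T s - m s / (3 * KB) * (‖uAAP s‖ ^ 2 - ‖u s‖ ^ 2)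
      + 2 / (3 * n s * KB * νs s) * ∑ k, γA s k * T k
      + 2 / (3 * n s * KB * νs s) * ∑ k, lam s k * (m s * m k * n s * n k / (m s + m k) ^ 2)
          * ⟪m s • u s + m k • u k, u k - u s⟫) :
    ∀ s, ∑ k, ν s k * (TAAP s - Tsk s k)
      = m s / (3 * KB) * ∑ k, ν s k * (a s k) ^ 2 * ‖u s - u k‖ ^ 2
        - m s / (3 * KB * νs s) * ‖∑ r, (ν s r * a s r) • (u r - u s)‖ ^ 2 := by
  intro s
  have hms : (0:ℝ) < m s := hm s
  have hns : (0:ℝ) < n s := hn s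
  have hKB' : KB ≠ 0 := ne_of_gt hKB
  have hns' : n s ≠ 0 := ne_of_gt hns
  have hNe : Nonempty (Fin L) := ⟨⟨0, hL⟩⟩
  have hνpos : 0 < νs s := by
    rw [hνs s]
    exact Finset.sum_pos (fun k _ => by rw [hν]; exact mul_pos (hlam s k) (hn k))
      Finset.univ_nonempty
  have hν0 : νs s ≠ 0 := ne_of_gt hνpos
  have hmm : ∀ k, m s + m k ≠ 0 := fun k => ne_of_gt (add_pos hms (hm k))
  set W : EuclideanSpace ℝ (Fin 3) := ∑ r, (ν s r * a s r) • (u r - u s) with hWdef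
  -- Step A: the ξ-sum
  have hW1 : ∑ k, ξ s k • u k = (m s * n s) • W := by
    have h1 : ∀ k, ξ s k • u k
        = (m s * n s * (ν s k * a s k)) • u k
          - (if s = k then ((m s * n s * ∑ r, ν s r * a s r)) • u k else 0) := by
      intro k
      have e1 : lam s k * m s * m k * n s * n k / (m s + m k)
          = m s * n s * (ν s k * a s k) := by rw [hν, ha]; ring
      have e2 : (∑ r, lam s r * m s * m r * n s * n r / (m s + m r))
          = m s * n s * ∑ r, ν s r * a s r := by
        rw [Finset.mul_sum]
        exact Finset.sum_congr rfl fun r _ => by rw [hν, ha]; ring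
      rw [hξ s k, e1, e2, sub_smul]
      congr 1
      split <;> simp
    rw [Finset.sum_congr rfl fun k _ => h1 k, Finset.sum_sub_distrib]
    have h2 : (∑ k, if s = k then ((m s * n s * ∑ r, ν s r * a s r)) • u k else 0)
        = (m s * n s * ∑ r, ν s r * a s r) • u s := by
      rw [Finset.sum_ite_eq]
      simp
    rw [h2, hWdef, Finset.smul_sum]
    simp only [smul_sub, smul_smul, Finset.sum_sub_distrib]
    congr 1
    rw [← Finset.sum_smul, Finset.mul_sum]
  have huA : uAAP s = u s + (νs s)⁻¹ • W := by
    rw [huAAP s, hW1, smul_smul]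
    congr 2
    field_simp
  have hBnorm : ‖uAAP s‖ ^ 2
      = ‖u s‖ ^ 2 + 2 * (νs s)⁻¹ * ⟪u s, W⟫ + ((νs s)⁻¹) ^ 2 * ‖W‖ ^ 2 := by
    rw [huA, norm_add_sq_real, real_inner_smul_right, norm_smul, Real.norm_eq_abs,
      mul_pow, sq_abs]
    ring
  -- Step C : the γA-sum
  have hCsum : ∑ k, γA s k * T k
      = 3 * KB * n s / 2 * ((∑ k, ν s k * b s k * T k) - (∑ k, ν s k * b s k) * T s) := by
    have h1 : ∀ k, γA s k * T k
        = (3 * KB * n s / 2 * (ν s k * b s k)) * T k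
          - (if s = k then (3 * KB * n s / 2 * ∑ r, ν s r * b s r) * T k else 0) := by
      intro k
      have e1 : 3 * KB * lam s k * m s * m k * n s * n k / (m s + m k) ^ 2
          = 3 * KB * n s / 2 * (ν s k * b s k) := by
        rw [hν, hb, ha]; field_simp [hmm k]
      have e2 : (∑ r, 3 * KB * lam s r * m s * m r * n s * n r / (m s + m r) ^ 2)
          = 3 * KB * n s / 2 * ∑ r, ν s r * b s r := by
        rw [Finset.mul_sum]
        exact Finset.sum_congr rfl fun r _ => by
          rw [hν, hb, ha]; field_simp [hmm r]
      rw [hγA s k, e1, e2, sub_mul]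
      congr 1
      split <;> simp
    rw [Finset.sum_congr rfl fun k _ => h1 k, Finset.sum_sub_distrib]
    have h2 : (∑ k, if s = k then (3 * KB * n s / 2 * ∑ r, ν s r * b s r) * T k else 0)
        = (3 * KB * n s / 2 * ∑ r, ν s r * b s r) * T s := by
      rw [Finset.sum_ite_eq]; simp
    rw [h2, mul_sub]
    congr 1
    · rw [Finset.mul_sum]
      exact Finset.sum_congr rfl fun k _ => by ring
    · ring
  -- Step D : the inner product sum
  have hP : ∑ k, ν s k * a s k * ⟪u s, u k - u s⟫ = ⟪u s, W⟫ := by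
    rw [hWdef, inner_sum]
    exact Finset.sum_congr rfl fun k _ => by rw [real_inner_smul_right]
  have hDsum : ∑ k, lam s k * (m s * m k * n s * n k / (m s + m k) ^ 2)
        * ⟪m s • u s + m k • u k, u k - u s⟫
      = n s / 2 * (∑ k, ν s k * (b s k * m k) * ‖u k - u s‖ ^ 2)
        + n s * m s * ⟪u s, W⟫ := by
    have h1 : ∀ k, lam s k * (m s * m k * n s * n k / (m s + m k) ^ 2)
          * ⟪m s • u s + m k • u k, u k - u s⟫
        = n s / 2 * (ν s k * (b s k * m k) * ‖u k - u s‖ ^ 2)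
          + n s * m s * (ν s k * a s k * ⟪u s, u k - u s⟫) := by
      intro k
      have hip : ⟪m s • u s + m k • u k, u k - u s⟫
          = m k * ‖u k - u s‖ ^ 2 + (m s + m k) * ⟪u s, u k - u s⟫ := by
        have hv : m s • u s + m k • u k = m k • (u k - u s) + (m s + m k) • u s := by
          module
        rw [hv, inner_add_left, real_inner_smul_left, real_inner_smul_left,
          real_inner_self_eq_norm_sq]
      rw [hip, hν, hb, ha]
      generalize ⟪u s, u k - u s⟫ = X
      generalize ‖u k - u s‖ ^ 2 = E
      field_simp [hmm k]
    rw [Finset.sum_congr rfl fun k _ => h1 k, Finset.sum_add_distrib, ← hP,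
      Finset.mul_sum, Finset.mul_sum]
  -- sum of Tsk
  have h2 : ∑ k, ν s k * Tsk s k
      = νs s * T s - (∑ k, ν s k * b s k) * T s + (∑ k, ν s k * b s k * T k)
        + (1 / KB) * ∑ k, ν s k * γ s k * ‖u k - u s‖ ^ 2 := by
    have h1 : ∀ k, ν s k * Tsk s k
        = ν s k * T s - ν s k * b s k * T s + ν s k * b s k * T k
          + (1 / KB) * (ν s k * γ s k * ‖u k - u s‖ ^ 2) := by
      intro k
      rw [hTsk s k, norm_sub_rev]
      generalize ‖u k - u s‖ ^ 2 = E
      field_simp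
    rw [Finset.sum_congr rfl fun k _ => h1 k]
    rw [Finset.sum_add_distrib, Finset.sum_add_distrib, Finset.sum_sub_distrib,
      ← Finset.sum_mul, ← Finset.sum_mul, ← Finset.mul_sum, ← hνs s]
  -- key coefficient identity
  have hE : ∀ k, b s k * m k = m s * a s k ^ 2 + 3 * γ s k := by
    intro k
    rw [hb, hγ, ha]
    field_simp [hmm k]
    ring
  have hrel : (∑ k, ν s k * (b s k * m k) * ‖u k - u s‖ ^ 2)
      = m s * (∑ k, ν s k * a s k ^ 2 * ‖u k - u s‖ ^ 2)
        + 3 * ∑ k, ν s k * γ s k * ‖u k - u s‖ ^ 2 := by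
    rw [Finset.mul_sum, Finset.mul_sum, ← Finset.sum_add_distrib]
    exact Finset.sum_congr rfl fun k _ => by rw [hE k]; ring
  -- νs s * TAAP s
  have hTA : νs s * TAAP s
      = νs s * T s - m s / (3 * KB) * (2 * ⟪u s, W⟫ + (νs s)⁻¹ * ‖W‖ ^ 2)
        + ((∑ k, ν s k * b s k * T k) - (∑ k, ν s k * b s k) * T s)
        + 1 / (3 * KB) * ((∑ k, ν s k * (b s k * m k) * ‖u k - u s‖ ^ 2)
          + 2 * m s * ⟪u s, W⟫) := by
    rw [hTAAP s, hBnorm, hCsum, hDsum]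
    generalize ⟪u s, W⟫ = P
    generalize ‖W‖ ^ 2 = Q
    generalize ‖u s‖ ^ 2 = N
    generalize (∑ k, ν s k * b s k * T k) = SbT
    generalize (∑ k, ν s k * b s k) = B
    generalize (∑ k, ν s k * (b s k * m k) * ‖u k - u s‖ ^ 2) = SbmE
    field_simp
    ring
  -- final assembly
  have hLHS : ∑ k, ν s k * (TAAP s - Tsk s k)
      = νs s * TAAP s - ∑ k, ν s k * Tsk s k := by
    rw [Finset.sum_congr rfl fun k _ => (mul_sub (ν s k) (TAAP s) (Tsk s k)),
      Finset.sum_sub_distrib, ← Finset.sum_mul, ← hνs s]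
  have hRHSsum : ∑ k, ν s k * (a s k) ^ 2 * ‖u s - u k‖ ^ 2
      = ∑ k, ν s k * a s k ^ 2 * ‖u k - u s‖ ^ 2 :=
    Finset.sum_congr rfl fun k _ => by rw [norm_sub_rev]
  rw [hLHS, hTA, h2, hRHSsum, hrel]
  generalize ⟪u s, W⟫ = P
  generalize ‖W‖ ^ 2 = Q
  generalize (∑ k, ν s k * b s k * T k) = SbT
  generalize (∑ k, ν s k * b s k) = B
  generalize (∑ k, ν s k * a s k ^ 2 * ‖u k - u s‖ ^ 2) = A
  generalize (∑ k, ν s k * γ s k * ‖u k - u s‖ ^ 2) = SG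
  field_simp
  ring
end

section
/- Let L ≥ 1 and for s,r ∈ {1,…,L} let m_s > 0, n_s > 0, u_s ∈ ℝ³, λ_{sr} > 0 symmetric, ν_{sr} = λ_{sr} n_r and ν_s = Σ_r ν_{sr}. Define the AAP auxiliary velocity u^s = u_s + (1/(m_s n_s ν_s)) Σ_k ξ^{sk} u_k with ξ^{sk} = λ_{sk} m_s m_k n_s n_k/(m_s+m_k) − δ_{sk} Σ_r λ_{sr} m_s m_r n_s n_r/(m_s+m_r), and the GS global auxiliary velocity ū = (Σ_r ν_r m_r n_r u_r)/(Σ_r ν_r m_r n_r). Then for every s, the leading-order velocity discrepancy between the AAP and GS models equals 𝓔̄_u := ν_s (u^s − ū) = Σ_{r≠s} ( λ_{sr} m_r n_r/(m_s+m_r) − ν_s ν_r m_r n_r/(Σ_{ℓ=1}^L ν_ℓ m_ℓ n_ℓ) ) (u_r − u_s), which in general does not vanish. -/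
open scoped BigOperators
open RealInnerProductSpace

theorem aap_gs_velocity_discrepancy
    (L : ℕ) (hL : 1 ≤ L)
    (m n : Fin L → ℝ) (u : Fin L → EuclideanSpace ℝ (Fin 3))
    (lam : Fin L → Fin L → ℝ)
    (hm : ∀ s, 0 < m s) (hn : ∀ s, 0 < n s)
    (hlam : ∀ s r, 0 < lam s r) (hlamsym : ∀ s r, lam s r = lam r s)
    (ν : Fin L → Fin L → ℝ) (hν : ∀ s r, ν s r = lam s r * n r)
    (νs : Fin L → ℝ) (hνs : ∀ s, νs s = ∑ r, ν s r)
    (ξ : Fin L → Fin L → ℝ)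
    (hξ : ∀ s k, ξ s k = lam s k * m s * m k * n s * n k / (m s + m k)
      - (if s = k then ∑ r, lam s r * m s * m r * n s * n r / (m s + m r) else 0))
    (uAAP : Fin L → EuclideanSpace ℝ (Fin 3))
    (huAAP : ∀ s, uAAP s = u s + (1 / (m s * n s * νs s)) • ∑ k, ξ s k • u k)
    (ubar : EuclideanSpace ℝ (Fin 3))
    (hubar : ubar = (1 / ∑ r, νs r * m r * n r) • ∑ r, (νs r * m r * n r) • u r) :
    ∀ s, νs s • (uAAP s - ubar)
      = ∑ r ∈ Finset.univ.erase s,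
          (lam s r * m r * n r / (m s + m r)
            - νs s * νs r * m r * n r / (∑ ℓ, νs ℓ * m ℓ * n ℓ)) • (u r - u s) := by
  intro s
  have hne : (Finset.univ : Finset (Fin L)).Nonempty := ⟨⟨0, hL⟩, Finset.mem_univ _⟩
  have hνpos : ∀ t, 0 < νs t := by
    intro t
    rw [hνs]
    exact Finset.sum_pos (fun r _ => by rw [hν]; exact mul_pos (hlam t r) (hn r)) hne
  have hSpos : 0 < ∑ ℓ, νs ℓ * m ℓ * n ℓ :=
    Finset.sum_pos (fun r _ => by
      have h1 := hνpos r; have h2 := hm r; have h3 := hn r; positivity) hne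
  set S := ∑ ℓ, νs ℓ * m ℓ * n ℓ with hS
  -- ξ s s equals minus the sum of the off-diagonal terms
  have hoff : ∀ k ∈ Finset.univ.erase s,
      ξ s k = lam s k * m s * m k * n s * n k / (m s + m k) := by
    intro k hk
    rw [hξ, if_neg (Finset.ne_of_mem_erase hk).symm, sub_zero]
  have hξs : ξ s s = -∑ k ∈ Finset.univ.erase s, ξ s k := by
    rw [Finset.sum_congr rfl hoff, hξ, if_pos rfl,
      ← Finset.add_sum_erase _ _ (Finset.mem_univ s)]
    ring
  have sumA : ∑ k, ξ s k • u k = ∑ k ∈ Finset.univ.erase s, ξ s k • (u k - u s) := by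
    rw [← Finset.add_sum_erase _ _ (Finset.mem_univ s), hξs]
    simp only [smul_sub]
    rw [Finset.sum_sub_distrib, ← Finset.sum_smul, neg_smul]
    abel
  have claimA : νs s • (uAAP s - u s)
      = ∑ k ∈ Finset.univ.erase s,
          (lam s k * m k * n k / (m s + m k)) • (u k - u s) := by
    rw [huAAP, add_sub_cancel_left, sumA, Finset.smul_sum, Finset.smul_sum]
    refine Finset.sum_congr rfl fun k hk => ?_
    rw [smul_smul, smul_smul, hoff k hk]
    congr 1
    have h1 := (hm s).ne'
    have h2 := (hn s).ne'
    have h3 := (hνpos s).ne'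
    have h4 : m s + m k ≠ 0 := by have := hm s; have := hm k; positivity
    field_simp
  have husum : u s = (1 / S) • ∑ r, (νs r * m r * n r) • u s := by
    rw [← Finset.sum_smul, ← hS, smul_smul, one_div, inv_mul_cancel₀ hSpos.ne', one_smul]
  have claimB : νs s • (u s - ubar)
      = ∑ r ∈ Finset.univ.erase s, (-(νs s * νs r * m r * n r / S)) • (u r - u s) := by
    rw [hubar]
    nth_rewrite 1 [husum]
    rw [← smul_sub, ← Finset.sum_sub_distrib]
    rw [Finset.smul_sum, Finset.smul_sum]
    simp only [← smul_sub]
    rw [← Finset.sum_erase (f := fun r => νs s • (1 / S) • (νs r * m r * n r) • (u s - u r))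
      Finset.univ (a := s) (by simp)]
    refine Finset.sum_congr rfl fun r hr => ?_
    rw [smul_smul, smul_smul, neg_smul, ← smul_neg, neg_sub]
    congr 1
    field_simp
  calc νs s • (uAAP s - ubar)
      = νs s • (uAAP s - u s) + νs s • (u s - ubar) := by
        rw [← smul_add]; congr 1; abel
    _ = ∑ r ∈ Finset.univ.erase s,
          (lam s r * m r * n r / (m s + m r)
            - νs s * νs r * m r * n r / S) • (u r - u s) := by
        rw [claimA, claimB, ← Finset.sum_add_distrib]
        refine Finset.sum_congr rfl fun r hr => ?_
        rw [← add_smul, ← sub_eq_add_neg]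
end

section
/- Let L ≥ 1, K_B > 0, and for s,r ∈ {1,…,L} let m_s > 0, n_s > 0, u_s ∈ ℝ³, λ_{sr} > 0 symmetric, ν_s = Σ_r λ_{sr} n_r, and let u^s = u_s + (1/ν_s) Σ_{r≠s} (λ_{sr} m_r n_r/(m_s+m_r)) (u_r − u_s) be the AAP auxiliary velocity. Then for every s: J₃ := ν_s [ −(m_s/(3K_B))(|u^s|² − |u_s|²) + (2/(3K_B ν_s)) Σ_{r=1}^L λ_{sr} (m_s m_r n_r/(m_s+m_r)²)(m_s u_s + m_r u_r)·(u_r − u_s) ] = −(m_s/(3K_B ν_s)) | Σ_{r≠s} (λ_{sr} m_r n_r/(m_s+m_r)) (u_r − u_s) |² + (2 m_s/(3K_B)) Σ_{r≠s} λ_{sr} (m_r² n_r/(m_s+m_r)²) |u_r − u_s|². -/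
open scoped BigOperators
open RealInnerProductSpace

theorem aap_gs_temperature_discrepancy_J3
    (L : ℕ) (hL : 1 ≤ L) (KB : ℝ) (hKB : 0 < KB)
    (m n : Fin L → ℝ) (u : Fin L → EuclideanSpace ℝ (Fin 3))
    (lam : Fin L → Fin L → ℝ)
    (hm : ∀ s, 0 < m s) (hn : ∀ s, 0 < n s)
    (hlam : ∀ s r, 0 < lam s r) (hlamsym : ∀ s r, lam s r = lam r s)
    (νs : Fin L → ℝ) (hνs : ∀ s, νs s = ∑ r, lam s r * n r)
    (uAAP : Fin L → EuclideanSpace ℝ (Fin 3))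
    (huAAP : ∀ s, uAAP s = u s + (1 / νs s) •
      ∑ r ∈ Finset.univ.erase s, (lam s r * m r * n r / (m s + m r)) • (u r - u s)) :
    ∀ s, νs s * (-(m s / (3 * KB)) * (‖uAAP s‖ ^ 2 - ‖u s‖ ^ 2)
        + 2 / (3 * KB * νs s) * ∑ r, lam s r * (m s * m r * n r / (m s + m r) ^ 2)
            * ⟪m s • u s + m r • u r, u r - u s⟫)
      = -(m s / (3 * KB * νs s))
          * ‖∑ r ∈ Finset.univ.erase s, (lam s r * m r * n r / (m s + m r)) • (u r - u s)‖ ^ 2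
        + 2 * m s / (3 * KB)
          * ∑ r ∈ Finset.univ.erase s, lam s r * (m r ^ 2 * n r / (m s + m r) ^ 2) * ‖u r - u s‖ ^ 2 := by
  intro s
  have : NeZero L := ⟨Nat.one_le_iff_ne_zero.mp hL⟩
  have hν : 0 < νs s := by
    rw [hνs]
    exact Finset.sum_pos (fun r _ => mul_pos (hlam s r) (hn r)) Finset.univ_nonempty
  set w : EuclideanSpace ℝ (Fin 3) :=
    ∑ r ∈ Finset.univ.erase s, (lam s r * m r * n r / (m s + m r)) • (u r - u s) with hw
  have hnorm : ‖uAAP s‖ ^ 2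
      = ‖u s‖ ^ 2 + 2 * ((1 / νs s) * ⟪u s, w⟫) + (1 / νs s) ^ 2 * ‖w‖ ^ 2 := by
    rw [huAAP s, ← hw, norm_add_sq_real, real_inner_smul_right, norm_smul, mul_pow, Real.norm_eq_abs, sq_abs]
  have hA : ⟪u s, w⟫
      = ∑ r ∈ Finset.univ.erase s, (lam s r * m r * n r / (m s + m r)) * ⟪u s, u r - u s⟫ := by
    rw [hw, inner_sum]
    exact Finset.sum_congr rfl fun r _ => real_inner_smul_right _ _ _
  have hS : ∑ r, lam s r * (m s * m r * n r / (m s + m r) ^ 2) * ⟪m s • u s + m r • u r, u r - u s⟫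
      = m s * ⟪u s, w⟫
        + m s * ∑ r ∈ Finset.univ.erase s,
            lam s r * (m r ^ 2 * n r / (m s + m r) ^ 2) * ‖u r - u s‖ ^ 2 := by
    rw [← Finset.add_sum_erase _ _ (Finset.mem_univ s)]
    simp only [sub_self, inner_zero_right, mul_zero, zero_add]
    rw [hA, Finset.mul_sum, Finset.mul_sum, ← Finset.sum_add_distrib]
    refine Finset.sum_congr rfl fun r _ => ?_
    have hdec : m s • u s + m r • u r = (m s + m r) • u s + m r • (u r - u s) := by
      rw [add_smul, smul_sub]; abel
    rw [hdec, inner_add_left, real_inner_smul_left, real_inner_smul_left,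
      real_inner_self_eq_norm_sq]
    have hmm : m s + m r ≠ 0 := by have := hm s; have := hm r; positivity
    field_simp
  rw [hnorm, hS]
  have hν' : νs s ≠ 0 := hν.ne'
  have hK : KB ≠ 0 := hKB.ne'
  field_simp
  ring
end

section
/- Let L ≥ 1, K_B > 0, and for s,r ∈ {1,…,L} let m_s > 0, n_s > 0, u_s ∈ ℝ³, T_s ∈ ℝ, λ_{sr} > 0 symmetric, ν_s = Σ_r λ_{sr} n_r, u^s and T^s the AAP auxiliary velocity and temperature defined by u^s = u_s + (1/ν_s) Σ_{r≠s} (λ_{sr} m_r n_r/(m_s+m_r))(u_r−u_s) and T^s = T_s − (m_s/(3K_B))(|u^s|²−|u_s|²) + (2/(3 n_s K_B ν_s)) Σ_r γ^{sr} T_r + (2/(3 n_s K_B ν_s)) Σ_r λ_{sr} (m_s m_r n_s n_r/(m_s+m_r)²)(m_s u_s + m_r u_r)·(u_r−u_s), with γ^{sr} = 3K_B λ_{sr} m_s m_r n_s n_r/(m_s+m_r)² − δ_{sr} Σ_ℓ 3K_B λ_{sℓ} m_s m_ℓ n_s n_ℓ/(m_s+m_ℓ)². Let ū = (Σ_r ν_r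 m_r n_r u_r)/(Σ_r ν_r m_r n_r) and T̄ = (Σ_r ν_r n_r (m_r(|u_r|²−|ū|²) + 3K_B T_r))/(3K_B Σ_r ν_r n_r). Then ν_s(T^s − T̄) = J₁ + J₂ + J₃, where J₁ = Σ_{r≠s}(2λ_{sr} m_s m_r n_r/(m_s+m_r)² − ν_s ν_r n_r/(Σ_ℓ ν_ℓ n_ℓ))(T_r−T_s); J₂ = ν_s · [ Σ_{r=1}^L ν_r n_r m_r ( (Σ_ℓ ν_ℓ m_ℓ n_ℓ (u_ℓ−u_r)) · (Σ_ℓ ν_ℓ m_ℓ n_ℓ (u_ℓ+u_r)) ) ] / ( 3K_B (Σ_r ν_r n_r)(Σ_ℓ ν_ℓ m_ℓ n_ℓ)² ); and J₃ = −(m_s/(3K_B ν_s)) |Σ_{r≠s}(λ_{sr} m_r n_r/(m_s+m_r))(u_r−u_s)|² + (2m_s/(3K_B)) Σ_{r≠s} λ_{sr}(m_r² n_r/(m_s+m_r)²)|u_r−u_s|². -/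
open scoped BigOperators
open RealInnerProductSpace

set_option maxHeartbeats 1000000 in
theorem aap_gs_temperature_discrepancy_decomposition
    (L : ℕ) (hL : 1 ≤ L) (KB : ℝ) (hKB : 0 < KB)
    (m n T : Fin L → ℝ) (u : Fin L → EuclideanSpace ℝ (Fin 3))
    (lam : Fin L → Fin L → ℝ)
    (hm : ∀ s, 0 < m s) (hn : ∀ s, 0 < n s)
    (hlam : ∀ s r, 0 < lam s r) (hlamsym : ∀ s r, lam s r = lam r s)
    (νs : Fin L → ℝ) (hνs : ∀ s, νs s = ∑ r, lam s r * n r)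
    (uAAP : Fin L → EuclideanSpace ℝ (Fin 3))
    (huAAP : ∀ s, uAAP s = u s + (1 / νs s) •
      ∑ r ∈ Finset.univ.erase s, (lam s r * m r * n r / (m s + m r)) • (u r - u s))
    (γA : Fin L → Fin L → ℝ)
    (hγA : ∀ s r, γA s r = 3 * KB * lam s r * m s * m r * n s * n r / (m s + m r) ^ 2
      - (if s = r then ∑ ℓ, 3 * KB * lam s ℓ * m s * m ℓ * n s * n ℓ / (m s + m ℓ) ^ 2 else 0))
    (TAAP : Fin L → ℝ)
    (hTAAP : ∀ s, TAAP s = T s - m s / (3 * KB) * (‖uAAP s‖ ^ 2 - ‖u s‖ ^ 2)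
      + 2 / (3 * n s * KB * νs s) * ∑ r, γA s r * T r
      + 2 / (3 * n s * KB * νs s) * ∑ r, lam s r * (m s * m r * n s * n r / (m s + m r) ^ 2)
          * ⟪m s • u s + m r • u r, u r - u s⟫)
    (ubar : EuclideanSpace ℝ (Fin 3))
    (hubar : ubar = (1 / ∑ r, νs r * m r * n r) • ∑ r, (νs r * m r * n r) • u r)
    (Tbar : ℝ)
    (hTbar : Tbar = (∑ r, νs r * n r * (m r * (‖u r‖ ^ 2 - ‖ubar‖ ^ 2) + 3 * KB * T r))
      / (3 * KB * ∑ r, νs r * n r))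
    (J₁ J₂ J₃ : Fin L → ℝ)
    (hJ₁ : ∀ s, J₁ s = ∑ r ∈ Finset.univ.erase s,
      (2 * lam s r * m s * m r * n r / (m s + m r) ^ 2
        - νs s * νs r * n r / (∑ ℓ, νs ℓ * n ℓ)) * (T r - T s))
    (hJ₂ : ∀ s, J₂ s = νs s *
      (∑ r, νs r * n r * m r *
        ⟪∑ ℓ, (νs ℓ * m ℓ * n ℓ) • (u ℓ - u r), ∑ ℓ, (νs ℓ * m ℓ * n ℓ) • (u ℓ + u r)⟫)
      / (3 * KB * (∑ r, νs r * n r) * (∑ ℓ, νs ℓ * m ℓ * n ℓ) ^ 2))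
    (hJ₃ : ∀ s, J₃ s = -(m s / (3 * KB * νs s))
        * ‖∑ r ∈ Finset.univ.erase s, (lam s r * m r * n r / (m s + m r)) • (u r - u s)‖ ^ 2
      + 2 * m s / (3 * KB)
        * ∑ r ∈ Finset.univ.erase s, lam s r * (m r ^ 2 * n r / (m s + m r) ^ 2) * ‖u r - u s‖ ^ 2) :
    ∀ s, νs s * (TAAP s - Tbar) = J₁ s + J₂ s + J₃ s := by
  intro s
  haveI : Nonempty (Fin L) := Fin.pos_iff_nonempty.mp hL
  have hνpos : ∀ t, 0 < νs t := by
    intro t; rw [hνs]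
    exact Finset.sum_pos (fun r _ => mul_pos (hlam t r) (hn r)) Finset.univ_nonempty
  have hν0 : νs s ≠ 0 := (hνpos s).ne'
  have hKB0 : KB ≠ 0 := hKB.ne'
  have hns0 : n s ≠ 0 := (hn s).ne'
  have hDn : (0:ℝ) < ∑ ℓ, νs ℓ * n ℓ :=
    Finset.sum_pos (fun r _ => mul_pos (hνpos r) (hn r)) Finset.univ_nonempty
  have hN : (0:ℝ) < ∑ ℓ, νs ℓ * m ℓ * n ℓ :=
    Finset.sum_pos (fun r _ => mul_pos (mul_pos (hνpos r) (hm r)) (hn r)) Finset.univ_nonempty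
  have hmm : ∀ r, m s + m r ≠ 0 := fun r => (add_pos (hm s) (hm r)).ne'
  set Dn := ∑ ℓ, νs ℓ * n ℓ with hDndef
  set N := ∑ ℓ, νs ℓ * m ℓ * n ℓ with hNdef
  set S : EuclideanSpace ℝ (Fin 3) := ∑ ℓ, (νs ℓ * m ℓ * n ℓ) • u ℓ with hSdef
  set w : EuclideanSpace ℝ (Fin 3) :=
    ∑ r ∈ Finset.univ.erase s, (lam s r * m r * n r / (m s + m r)) • (u r - u s) with hwdef
  -- Part A : temperature part equals J₁
  have hγsum : (∑ r, γA s r * T r)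
      = ∑ r ∈ Finset.univ.erase s,
          (3 * KB * lam s r * m s * m r * n s * n r / (m s + m r) ^ 2) * (T r - T s) := by
    have h1 : (∑ r, γA s r * T r)
        = (∑ r, (3 * KB * lam s r * m s * m r * n s * n r / (m s + m r) ^ 2) * T r)
          - (∑ ℓ, 3 * KB * lam s ℓ * m s * m ℓ * n s * n ℓ / (m s + m ℓ) ^ 2) * T s := by
      simp only [hγA, sub_mul, ite_mul, zero_mul, Finset.sum_sub_distrib,
        Finset.sum_ite_eq, Finset.mem_univ, if_true]
    rw [h1, Finset.sum_mul, ← Finset.sum_sub_distrib,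
      ← Finset.sum_erase (Finset.univ)
        (f := fun r => (3 * KB * lam s r * m s * m r * n s * n r / (m s + m r) ^ 2) * T r
          - (3 * KB * lam s r * m s * m r * n s * n r / (m s + m r) ^ 2) * T s)
        (by ring)]
    exact Finset.sum_congr rfl fun r _ => by ring
  have hTpart : νs s * T s - νs s * (∑ r, νs r * n r * T r) / Dn
      + 2 / (3 * n s * KB) * (∑ r, γA s r * T r) = J₁ s := by
    have h2 : (∑ r, νs r * n r * T r) - Dn * T s
        = ∑ r ∈ Finset.univ.erase s, νs r * n r * (T r - T s) := by
      rw [Finset.sum_erase (Finset.univ) (f := fun r => νs r * n r * (T r - T s)) (by ring),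
        hDndef, Finset.sum_mul, ← Finset.sum_sub_distrib]
      exact Finset.sum_congr rfl fun r _ => by ring
    have h3 : νs s * T s - νs s * (∑ r, νs r * n r * T r) / Dn
        = -(νs s / Dn) * ((∑ r, νs r * n r * T r) - Dn * T s) := by
      field_simp
      ring
    rw [hJ₁, hγsum, h3, h2, Finset.mul_sum, Finset.mul_sum, ← Finset.sum_add_distrib]
    refine Finset.sum_congr rfl fun r hr => ?_
    have h4 := hmm r
    field_simp
    ring
  -- Part B : ubar part equals J₂
  have hub : ‖ubar‖ ^ 2 = ‖S‖ ^ 2 / N ^ 2 := by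
    rw [hubar, norm_smul, Real.norm_eq_abs,
      abs_of_pos (div_pos one_pos hN)]
    field_simp
  have hinner2 : ∀ r, ⟪∑ ℓ, (νs ℓ * m ℓ * n ℓ) • (u ℓ - u r),
        ∑ ℓ, (νs ℓ * m ℓ * n ℓ) • (u ℓ + u r)⟫
      = ‖S‖ ^ 2 - N ^ 2 * ‖u r‖ ^ 2 := by
    intro r
    have h1 : (∑ ℓ, (νs ℓ * m ℓ * n ℓ) • (u ℓ - u r)) = S - N • u r := by
      rw [hSdef, hNdef, Finset.sum_smul, ← Finset.sum_sub_distrib]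
      exact Finset.sum_congr rfl fun ℓ _ => smul_sub _ _ _
    have h2 : (∑ ℓ, (νs ℓ * m ℓ * n ℓ) • (u ℓ + u r)) = S + N • u r := by
      rw [hSdef, hNdef, Finset.sum_smul, ← Finset.sum_add_distrib]
      exact Finset.sum_congr rfl fun ℓ _ => smul_add _ _ _
    rw [h1, h2]
    simp only [inner_sub_left, inner_add_right, real_inner_smul_left, real_inner_smul_right,
      real_inner_self_eq_norm_sq, real_inner_comm (u r) S]
    rw [norm_smul, Real.norm_eq_abs, mul_pow, sq_abs]
    ring
  have hB : -(νs s * (∑ r, νs r * n r * (m r * (‖u r‖ ^ 2 - ‖ubar‖ ^ 2))) / (3 * KB * Dn))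
      = J₂ s := by
    rw [hJ₂]
    have h1 : ∀ r : Fin L, νs r * n r * m r * (‖S‖ ^ 2 - N ^ 2 * ‖u r‖ ^ 2)
        = -(N ^ 2 * (νs r * n r * (m r * (‖u r‖ ^ 2 - ‖ubar‖ ^ 2)))) := by
      intro r; rw [hub]; field_simp; ring
    have h2 : (∑ r, νs r * n r * m r *
          ⟪∑ ℓ, (νs ℓ * m ℓ * n ℓ) • (u ℓ - u r), ∑ ℓ, (νs ℓ * m ℓ * n ℓ) • (u ℓ + u r)⟫)
        = -(N ^ 2 * ∑ r, νs r * n r * (m r * (‖u r‖ ^ 2 - ‖ubar‖ ^ 2))) := by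
      rw [Finset.mul_sum, ← Finset.sum_neg_distrib]
      exact Finset.sum_congr rfl fun r _ => by rw [hinner2 r]; exact h1 r
    rw [h2]
    field_simp
  -- Part C : AAP velocity part equals J₃
  have hwip : ⟪u s, w⟫ = ∑ r ∈ Finset.univ.erase s,
      (lam s r * m r * n r / (m s + m r)) * ⟪u s, u r - u s⟫ := by
    rw [hwdef, inner_sum]
    exact Finset.sum_congr rfl fun r _ => real_inner_smul_right _ _ _
  have hnorm : ‖uAAP s‖ ^ 2 - ‖u s‖ ^ 2
      = 2 / (νs s) * ⟪u s, w⟫ + (1 / νs s) ^ 2 * ‖w‖ ^ 2 := by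
    rw [huAAP s, ← hwdef, norm_add_sq_real, real_inner_smul_right, norm_smul,
      Real.norm_eq_abs, abs_of_pos (div_pos one_pos (hνpos s))]
    ring
  have hinner3 : ∀ r, ⟪m s • u s + m r • u r, u r - u s⟫
      = (m s + m r) * ⟪u s, u r - u s⟫ + m r * ‖u r - u s‖ ^ 2 := by
    intro r
    have h1 : m s • u s + m r • u r = (m s + m r) • u s + m r • (u r - u s) := by
      rw [add_smul, smul_sub]; abel
    rw [h1, inner_add_left, real_inner_smul_left, real_inner_smul_left,
      real_inner_self_eq_norm_sq]
  have hsum3 : (∑ r, lam s r * (m s * m r * n s * n r / (m s + m r) ^ 2)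
        * ⟪m s • u s + m r • u r, u r - u s⟫)
      = ∑ r ∈ Finset.univ.erase s, lam s r * (m s * m r * n s * n r / (m s + m r) ^ 2)
          * ((m s + m r) * ⟪u s, u r - u s⟫ + m r * ‖u r - u s‖ ^ 2) := by
    rw [Finset.sum_congr rfl (fun r _ => by rw [hinner3 r])]
    exact (Finset.sum_erase _ (by simp)).symm
  have hC : -(m s / (3 * KB)) * νs s * (‖uAAP s‖ ^ 2 - ‖u s‖ ^ 2)
      + 2 / (3 * n s * KB) * (∑ r, lam s r * (m s * m r * n s * n r / (m s + m r) ^ 2)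
          * ⟪m s • u s + m r • u r, u r - u s⟫)
      = J₃ s := by
    rw [hJ₃, ← hwdef, hnorm, hsum3]
    have hkey : 2 / (3 * n s * KB) * (∑ r ∈ Finset.univ.erase s,
          lam s r * (m s * m r * n s * n r / (m s + m r) ^ 2)
            * ((m s + m r) * ⟪u s, u r - u s⟫ + m r * ‖u r - u s‖ ^ 2))
        = 2 * m s / (3 * KB) * (∑ r ∈ Finset.univ.erase s,
            (lam s r * m r * n r / (m s + m r)) * ⟪u s, u r - u s⟫)
          + 2 * m s / (3 * KB) * (∑ r ∈ Finset.univ.erase s,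
            lam s r * (m r ^ 2 * n r / (m s + m r) ^ 2) * ‖u r - u s‖ ^ 2) := by
      rw [Finset.mul_sum, Finset.mul_sum, Finset.mul_sum, ← Finset.sum_add_distrib]
      refine Finset.sum_congr rfl fun r hr => ?_
      have h4 := hmm r
      field_simp
    rw [hkey, ← hwip]
    field_simp
    ring
  -- Assembly
  have hsplit : (∑ r, νs r * n r * (m r * (‖u r‖ ^ 2 - ‖ubar‖ ^ 2) + 3 * KB * T r))
      = (∑ r, νs r * n r * (m r * (‖u r‖ ^ 2 - ‖ubar‖ ^ 2))) + 3 * KB * (∑ r, νs r * n r * T r) := by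
    rw [Finset.mul_sum, ← Finset.sum_add_distrib]
    exact Finset.sum_congr rfl fun r _ => by ring
  rw [← hTpart, ← hB, ← hC, hTAAP s, hTbar, hsplit]
  field_simp
  ring
end

section
/- Let L ≥ 1, K_B > 0, and for s ∈ {1,…,L} let m_s > 0, n_s > 0, ν_s > 0, T_s > 0 and u_s ∈ ℝ³. Define ū = (Σ_s ν_s m_s n_s u_s)/(Σ_s ν_s m_s n_s) and T̄ = (Σ_s ν_s n_s (m_s(|u_s|² − |ū|²) + 3K_B T_s))/(3K_B Σ_s ν_s n_s). Then T̄ > 0. -/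
open scoped BigOperators RealInnerProductSpace

lemma key_ineq {L : ℕ} (w : Fin L → ℝ) (hw : ∀ s, 0 ≤ w s)
    (u : Fin L → EuclideanSpace ℝ (Fin 3)) (v : EuclideanSpace ℝ (Fin 3))
    (hv : (∑ s, w s) • v = ∑ s, w s • u s) :
    (∑ s, w s) * ‖v‖ ^ 2 ≤ ∑ s, w s * ‖u s‖ ^ 2 := by
  have h1 : (∑ s, w s) * ‖v‖ ^ 2 = ⟪v, (∑ s, w s) • v⟫ := by
    rw [real_inner_smul_right, real_inner_self_eq_norm_sq]
  have h2 : ⟪v, (∑ s, w s) • v⟫ = ∑ s, w s * ⟪v, u s⟫ := by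
    rw [hv, inner_sum]
    exact Finset.sum_congr rfl fun s _ => real_inner_smul_right _ _ _
  have h3 : ∀ s : Fin L, w s * ⟪v, u s⟫ ≤ w s * ((‖v‖ ^ 2 + ‖u s‖ ^ 2) / 2) := by
    intro s
    refine mul_le_mul_of_nonneg_left ?_ (hw s)
    have := real_inner_le_norm v (u s)
    nlinarith [norm_nonneg v, norm_nonneg (u s), sq_nonneg (‖v‖ - ‖u s‖)]
  have h4 : (∑ s, w s) * ‖v‖ ^ 2 ≤ ∑ s, w s * ((‖v‖ ^ 2 + ‖u s‖ ^ 2) / 2) := by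
    rw [h1, h2]; exact Finset.sum_le_sum fun s _ => h3 s
  have h5 : ∑ s, w s * ((‖v‖ ^ 2 + ‖u s‖ ^ 2) / 2)
      = (∑ s, w s) * ‖v‖ ^ 2 / 2 + (∑ s, w s * ‖u s‖ ^ 2) / 2 := by
    rw [Finset.sum_mul, Finset.sum_div, Finset.sum_div, ← Finset.sum_add_distrib]
    exact Finset.sum_congr rfl fun s _ => by ring
  linarith

theorem gs_auxiliary_temperature_positive
    (L : ℕ) (hL : 1 ≤ L) (KB : ℝ) (hKB : 0 < KB)
    (m n ν T : Fin L → ℝ) (u : Fin L → EuclideanSpace ℝ (Fin 3))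
    (hm : ∀ s, 0 < m s) (hn : ∀ s, 0 < n s) (hν : ∀ s, 0 < ν s) (hT : ∀ s, 0 < T s)
    (ubar : EuclideanSpace ℝ (Fin 3))
    (hubar : ubar = (1 / ∑ s, ν s * m s * n s) • ∑ s, (ν s * m s * n s) • u s)
    (Tbar : ℝ)
    (hTbar : Tbar = (∑ s, ν s * n s * (m s * (‖u s‖ ^ 2 - ‖ubar‖ ^ 2) + 3 * KB * T s))
      / (3 * KB * ∑ s, ν s * n s)) :
    0 < Tbar := by
  haveI : Nonempty (Fin L) := ⟨⟨0, hL⟩⟩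
  have hne : (Finset.univ : Finset (Fin L)).Nonempty := Finset.univ_nonempty
  have hW : 0 < ∑ s, ν s * m s * n s :=
    Finset.sum_pos (fun s _ => mul_pos (mul_pos (hν s) (hm s)) (hn s)) hne
  have hv : (∑ s, ν s * m s * n s) • ubar = ∑ s, (ν s * m s * n s) • u s := by
    rw [hubar, smul_smul, mul_one_div, div_self hW.ne', one_smul]
  have hkey := key_ineq (fun s => ν s * m s * n s)
    (fun s => le_of_lt (mul_pos (mul_pos (hν s) (hm s)) (hn s))) u ubar hv
  have hsum : (∑ s, ν s * n s * (m s * (‖u s‖ ^ 2 - ‖ubar‖ ^ 2) + 3 * KB * T s))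
      = ((∑ s, (ν s * m s * n s) * ‖u s‖ ^ 2) - (∑ s, ν s * m s * n s) * ‖ubar‖ ^ 2)
        + 3 * KB * ∑ s, ν s * n s * T s := by
    rw [Finset.sum_mul, Finset.mul_sum, ← Finset.sum_sub_distrib, ← Finset.sum_add_distrib]
    exact Finset.sum_congr rfl fun s _ => by ring
  have hTsum : 0 < ∑ s, ν s * n s * T s :=
    Finset.sum_pos (fun s _ => mul_pos (mul_pos (hν s) (hn s)) (hT s)) hne
  have hden : 0 < 3 * KB * ∑ s, ν s * n s :=
    mul_pos (by linarith) (Finset.sum_pos (fun s _ => mul_pos (hν s) (hn s)) hne)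
  have hnum : 0 < ∑ s, ν s * n s * (m s * (‖u s‖ ^ 2 - ‖ubar‖ ^ 2) + 3 * KB * T s) := by
    rw [hsum]
    have : 0 < 3 * KB * ∑ s, ν s * n s * T s := mul_pos (by linarith) hTsum
    linarith
  rw [hTbar]
  exact div_pos hnum hden
end

section
/- Let K_B > 0, m_s, m_k > 0, n_k > 0, λ_{sk} > 0, u_s, u_k ∈ ℝ³, and T_s > 0, T_k > 0. Let ν_{sk} ≥ (1/2) λ_{sk} n_k and define a_{sk} = λ_{sk} n_k m_k/(ν_{sk}(m_s+m_k)), b_{sk} = 2 a_{sk} m_s/(m_s+m_k), γ_{sk} = (m_s a_{sk}/3)(2 m_k/(m_s+m_k) − a_{sk}), and T_{sk} = (1−b_{sk}) T_s + b_{sk} T_k + (γ_{sk}/K_B)|u_s − u_k|². Then T_{sk} > 0. -/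
open RealInnerProductSpace

theorem bbgsp_auxiliary_temperature_positive
    (KB ms mk nk lamsk : ℝ) (hKB : 0 < KB) (hms : 0 < ms) (hmk : 0 < mk)
    (hnk : 0 < nk) (hlam : 0 < lamsk)
    (us uk : EuclideanSpace ℝ (Fin 3)) (Ts Tk : ℝ) (hTs : 0 < Ts) (hTk : 0 < Tk)
    (νsk : ℝ) (hν : (1 / 2) * lamsk * nk ≤ νsk)
    (a b γ : ℝ)
    (ha : a = lamsk * nk * mk / (νsk * (ms + mk)))
    (hb : b = 2 * a * ms / (ms + mk))
    (hγ : γ = ms * a / 3 * (2 * mk / (ms + mk) - a))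
    (Tsk : ℝ)
    (hTsk : Tsk = (1 - b) * Ts + b * Tk + γ / KB * ‖us - uk‖ ^ 2) :
    0 < Tsk := by
  have hνpos : 0 < νsk := lt_of_lt_of_le (by positivity) hν
  have hsum : 0 < ms + mk := by positivity
  have ha_pos : 0 < a := by rw [ha]; positivity
  have ha_le : a ≤ 2 * mk / (ms + mk) := by
    rw [ha, div_le_div_iff₀ (by positivity) hsum]
    nlinarith [mul_nonneg (by linarith : (0:ℝ) ≤ 2 * νsk - lamsk * nk) (mul_pos hmk hsum).le]
  have haa : a * (ms + mk) ≤ 2 * mk := (le_div_iff₀ hsum).mp ha_le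
  have hb_pos : 0 < b := by rw [hb]; positivity
  have hb_le : b ≤ 1 := by
    rw [hb, div_le_one hsum]
    nlinarith [sq_nonneg (ms - mk), haa, hms.le]
  have hγ_nonneg : 0 ≤ γ := by
    rw [hγ]
    exact mul_nonneg (by positivity) (sub_nonneg.mpr ha_le)
  have h1 : 0 ≤ (1 - b) * Ts := mul_nonneg (by linarith) hTs.le
  have h2 : 0 < b * Tk := mul_pos hb_pos hTk
  have h3 : 0 ≤ γ / KB * ‖us - uk‖ ^ 2 :=
    mul_nonneg (div_nonneg hγ_nonneg hKB.le) (by positivity)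
  rw [hTsk]; linarith
end

section
/- Let L ≥ 1, K_B > 0, and for s ∈ {1,…,L} let m_s > 0, n_s > 0, ν_s > 0, T_s > 0, u_s ∈ ℝ³, and let f_s : ℝ³ → ℝ be integrable with ∫ f_s(v) dv = n_s and ∫ v f_s(v) dv = n_s u_s, where each component of v f_s is integrable. Define ū = (Σ_s ν_s m_s n_s u_s)/(Σ_s ν_s m_s n_s), T̄ = (Σ_s ν_s n_s (m_s(|u_s|² − |ū|²) + 3K_B T_s))/(3K_B Σ_s ν_s n_s), and the Maxwellian M(v; a, b) = (2πb)^{−3/2} exp(−|v−a|²/(2b)) for a ∈ ℝ³, b > 0. Then the GS relaxation operators conserve total momentum: Σ_{s=1}^L ∫ m_s v ν_s ( n_s M(v; ū, K_B T̄/m_s) − f_s(v) ) dv = 0 in ℝ³. -/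
/-!
A Maxwellian `M(·; a, b)` with `b > 0` is a probability density with mean `a`: after translating
by `a`, the first moment of the centred Gaussian vanishes by the symmetry `v ↦ -v`. Hence the
momentum relaxed by species `s` is `ν_s m_s n_s (ū - u_s)`, and these sum to zero by the very
definition of `ū`. The only real work is `T̄ > 0`, without which the Maxwellian is not
integrable: since `∑ w_s u_s = (∑ w_s) ū` for `w_s = ν_s m_s n_s`, the velocity part of the
numerator of `T̄` is the weighted variance `∑ w_s |u_s - ū|² ≥ 0`.
-/

open MeasureTheory Real Finset Module

section Maxwellian

variable {V : Type*} [NormedAddCommGroup V] [InnerProductSpace ℝ V]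

noncomputable def maxwellian (a : V) (b : ℝ) (v : V) : ℝ :=
  (2 * π * b) ^ (-(finrank ℝ V : ℝ) / 2) * exp (-‖v - a‖ ^ 2 / (2 * b))

lemma maxwellian_eq_maxwellian_zero_sub (a : V) (b : ℝ) (v : V) :
    maxwellian a b v = maxwellian 0 b (v - a) := by
  simp [maxwellian]

lemma maxwellian_zero_apply (b : ℝ) (v : V) :
    maxwellian 0 b v =
      (2 * π * b) ^ (-(finrank ℝ V : ℝ) / 2) * exp (-(2 * b)⁻¹ * ‖v‖ ^ 2) := by
  rw [maxwellian, sub_zero]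
  ring_nf

lemma le_exp_sq (y : ℝ) : y ≤ exp (y ^ 2) := by
  nlinarith [add_one_le_exp (y ^ 2), sq_nonneg (y - 1)]

lemma mul_exp_neg_mul_sq_le {b : ℝ} (hb : 0 < b) (x : ℝ) :
    x * exp (-b * x ^ 2) ≤ (√(b / 2))⁻¹ * exp (-(b / 2) * x ^ 2) := by
  have hx : x ≤ (√(b / 2))⁻¹ * exp (b / 2 * x ^ 2) := by
    have := le_exp_sq (√(b / 2) * x)
    rwa [mul_pow, sq_sqrt (by positivity), ← le_inv_mul_iff₀ (sqrt_pos.mpr (by positivity))]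
      at this
  calc x * exp (-b * x ^ 2) ≤ (√(b / 2))⁻¹ * exp (b / 2 * x ^ 2) * exp (-b * x ^ 2) := by
        gcongr
    _ = (√(b / 2))⁻¹ * exp (-(b / 2) * x ^ 2) := by
        rw [mul_assoc, ← exp_add]; ring_nf

variable [FiniteDimensional ℝ V] [MeasurableSpace V] [BorelSpace V]

lemma integrable_exp_neg_mul_sq_norm {b : ℝ} (hb : 0 < b) :
    Integrable (fun v : V => exp (-b * ‖v‖ ^ 2)) := by
  have h := (GaussianFourier.integrable_cexp_neg_mul_sq_norm_add (V := V) (b := (b : ℂ))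
    (by simpa using hb) 0 0).norm
  refine h.congr (Filter.Eventually.of_forall fun v => ?_)
  simp only [zero_mul, add_zero, Complex.norm_exp]
  norm_cast

lemma integrable_exp_neg_mul_sq_norm_smul {b : ℝ} (hb : 0 < b) :
    Integrable (fun v : V => exp (-b * ‖v‖ ^ 2) • v) := by
  refine Integrable.mono'
    ((integrable_exp_neg_mul_sq_norm (V := V) (half_pos hb)).const_mul (√(b / 2))⁻¹)
    (by fun_prop) (Filter.Eventually.of_forall fun v => ?_)
  rw [norm_smul, norm_of_nonneg (exp_pos _).le, mul_comm]
  exact mul_exp_neg_mul_sq_le hb ‖v‖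

lemma integral_radial_smul_self (φ : ℝ → ℝ) : ∫ v : V, φ ‖v‖ • v = 0 := by
  have h : ∫ v : V, φ ‖v‖ • v = -∫ v : V, φ ‖v‖ • v := by
    conv_lhs => rw [← integral_neg_eq_self]
    rw [← integral_neg]
    simp only [norm_neg, smul_neg]
  have h2 : (2 : ℝ) • ∫ v : V, φ ‖v‖ • v = 0 := by
    rw [two_smul]; exact eq_neg_iff_add_eq_zero.mp h
  exact (smul_eq_zero.mp h2).resolve_left two_ne_zero

lemma integrable_maxwellian_zero {b : ℝ} (hb : 0 < b) :
    Integrable (maxwellian 0 b : V → ℝ) := by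
  rw [funext (maxwellian_zero_apply b)]
  exact (integrable_exp_neg_mul_sq_norm (V := V) (by positivity)).const_mul _

lemma integrable_maxwellian_zero_smul {b : ℝ} (hb : 0 < b) :
    Integrable (fun v : V => maxwellian 0 b v • v) := by
  simp_rw [maxwellian_zero_apply, mul_smul]
  exact (integrable_exp_neg_mul_sq_norm_smul (V := V) (by positivity)).smul
    ((2 * π * b) ^ (-(finrank ℝ V : ℝ) / 2))

lemma integral_maxwellian_zero {b : ℝ} (hb : 0 < b) : ∫ v : V, maxwellian 0 b v = 1 := by
  simp_rw [maxwellian_zero_apply]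
  rw [integral_const_mul, GaussianFourier.integral_rexp_neg_mul_sq_norm (V := V) (by positivity),
    div_inv_eq_mul, show π * (2 * b) = 2 * π * b by ring, ← rpow_add (by positivity), neg_div,
    neg_add_cancel, rpow_zero]

lemma integral_maxwellian_zero_smul (b : ℝ) : ∫ v : V, maxwellian 0 b v • v = 0 := by
  simp_rw [maxwellian_zero_apply]
  exact integral_radial_smul_self fun r =>
    (2 * π * b) ^ (-(finrank ℝ V : ℝ) / 2) * exp (-(2 * b)⁻¹ * r ^ 2)

lemma integrable_maxwellian_smul {b : ℝ} (hb : 0 < b) (a : V) :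
    Integrable (fun v : V => maxwellian a b v • v) := by
  have h : Integrable (fun w : V => maxwellian 0 b w • w + maxwellian 0 b w • a) :=
    (integrable_maxwellian_zero_smul hb).add ((integrable_maxwellian_zero hb).smul_const a)
  refine (h.comp_sub_right a).congr (ae_of_all _ fun v => ?_)
  simp only [maxwellian_eq_maxwellian_zero_sub a b v, ← smul_add, sub_add_cancel]

lemma integral_maxwellian_smul {b : ℝ} (hb : 0 < b) (a : V) :
    ∫ v : V, maxwellian a b v • v = a :=
  calc ∫ v : V, maxwellian a b v • v = ∫ w : V, maxwellian a b (w + a) • (w + a) :=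
        (integral_add_right_eq_self _ a).symm
    _ = ∫ w : V, maxwellian 0 b w • w + maxwellian 0 b w • a := by
        simp_rw [maxwellian_eq_maxwellian_zero_sub a b, add_sub_cancel_right, smul_add]
    _ = a := by
        rw [integral_add (integrable_maxwellian_zero_smul hb)
          ((integrable_maxwellian_zero hb).smul_const a), integral_smul_const,
          integral_maxwellian_zero hb, integral_maxwellian_zero_smul, zero_add, one_smul]

end Maxwellian

lemma sum_mul_sub_norm_sq_eq_sum_mul_norm_sub_sq {ι F : Type*} [NormedAddCommGroup F]
    [InnerProductSpace ℝ F] (s : Finset ι) (w : ι → ℝ) (u : ι → F) {c : F}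
    (hc : ∑ i ∈ s, w i • u i = (∑ i ∈ s, w i) • c) :
    ∑ i ∈ s, w i * (‖u i‖ ^ 2 - ‖c‖ ^ 2) = ∑ i ∈ s, w i * ‖u i - c‖ ^ 2 := by
  have hinner : ∑ i ∈ s, w i * inner ℝ (u i) c = (∑ i ∈ s, w i) * ‖c‖ ^ 2 := by
    simp_rw [← real_inner_smul_left, ← sum_inner, hc, real_inner_smul_left,
      real_inner_self_eq_norm_sq]
  simp only [norm_sub_sq_real, mul_add, mul_sub, sum_add_distrib, sum_sub_distrib, ← sum_mul]
  simp only [mul_left_comm _ (2 : ℝ), ← mul_sum, hinner]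
  ring

lemma gs_temperature_pos {ι F : Type*} [Fintype ι] [Nonempty ι] [NormedAddCommGroup F]
    [InnerProductSpace ℝ F] {KB : ℝ} (hKB : 0 < KB) {m n ν T : ι → ℝ}
    (hm : ∀ s, 0 < m s) (hn : ∀ s, 0 < n s) (hν : ∀ s, 0 < ν s) (hT : ∀ s, 0 < T s)
    {u : ι → F} {ubar : F}
    (hubar : ∑ s, (ν s * m s * n s) • u s = (∑ s, ν s * m s * n s) • ubar) :
    0 < (∑ s, ν s * n s * (m s * (‖u s‖ ^ 2 - ‖ubar‖ ^ 2) + 3 * KB * T s))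
      / (3 * KB * ∑ s, ν s * n s) := by
  have hsplit : ∑ s, ν s * n s * (m s * (‖u s‖ ^ 2 - ‖ubar‖ ^ 2) + 3 * KB * T s)
      = ∑ s, ν s * m s * n s * ‖u s - ubar‖ ^ 2 + ∑ s, 3 * KB * (ν s * n s * T s) := by
    rw [← sum_mul_sub_norm_sq_eq_sum_mul_norm_sub_sq _ _ _ hubar, ← sum_add_distrib]
    exact sum_congr rfl fun s _ => by ring
  have hνnT : 0 < ∑ s, 3 * KB * (ν s * n s * T s) :=
    sum_pos (fun s _ => by have := hν s; have := hn s; have := hT s; positivity) univ_nonempty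
  have hνn : 0 < ∑ s, ν s * n s :=
    sum_pos (fun s _ => by have := hν s; have := hn s; positivity) univ_nonempty
  have hvar : 0 ≤ ∑ s, ν s * m s * n s * ‖u s - ubar‖ ^ 2 :=
    sum_nonneg fun s _ => by have := hν s; have := hm s; have := hn s; positivity
  rw [hsplit]
  positivity

lemma integral_relaxation_smul {V : Type*} [NormedAddCommGroup V] [NormedSpace ℝ V]
    [MeasurableSpace V] {μ : Measure V} {M f : V → ℝ} (hM : Integrable (fun v => M v • v) μ)
    (hf : Integrable (fun v => f v • v) μ) (m ν n : ℝ) :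
    ∫ v, (m * (ν * (n * M v - f v))) • v ∂μ
      = (m * ν) • (n • ∫ v, M v • v ∂μ - ∫ v, f v • v ∂μ) := by
  have h : (fun v => (m * (ν * (n * M v - f v))) • v)
      = fun v => (m * ν) • (n • (M v • v) - f v • v) := by
    funext v; module
  rw [h, integral_smul, integral_sub (hM.fun_smul n) hf, integral_smul]

theorem gs_total_momentum_conservation_general
    (L : ℕ) (hL : 1 ≤ L) (KB : ℝ) (hKB : 0 < KB)
    (m n ν T : Fin L → ℝ) (u : Fin L → EuclideanSpace ℝ (Fin 3))
    (hm : ∀ s, 0 < m s) (hn : ∀ s, 0 < n s) (hν : ∀ s, 0 < ν s) (hT : ∀ s, 0 < T s)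
    (f : Fin L → EuclideanSpace ℝ (Fin 3) → ℝ)
    (hfvint : ∀ s, Integrable (fun v => f s v • v))
    (hf1 : ∀ s, (∫ v, f s v • v) = n s • u s)
    (Mx : EuclideanSpace ℝ (Fin 3) → EuclideanSpace ℝ (Fin 3) → ℝ → ℝ)
    (hMx : ∀ v a b, Mx v a b = (2 * Real.pi * b) ^ (-(3 : ℝ) / 2)
      * Real.exp (-‖v - a‖ ^ 2 / (2 * b)))
    (ubar : EuclideanSpace ℝ (Fin 3))
    (hubar : ubar = (1 / ∑ s, ν s * m s * n s) • ∑ s, (ν s * m s * n s) • u s)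
    (Tbar : ℝ)
    (hTbar : Tbar = (∑ s, ν s * n s * (m s * (‖u s‖ ^ 2 - ‖ubar‖ ^ 2) + 3 * KB * T s))
      / (3 * KB * ∑ s, ν s * n s)) :
    ∑ s, (∫ v, (m s * (ν s * (n s * Mx v ubar (KB * Tbar / m s) - f s v))) • v)
      = (0 : EuclideanSpace ℝ (Fin 3)) := by
  have : Nonempty (Fin L) := ⟨⟨0, hL⟩⟩
  have hW : 0 < ∑ s, ν s * m s * n s :=
    sum_pos (fun s _ => by have := hν s; have := hm s; have := hn s; positivity) univ_nonempty
  have hmean : ∑ s, (ν s * m s * n s) • u s = (∑ s, ν s * m s * n s) • ubar := by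
    rw [hubar, smul_smul, mul_one_div_cancel hW.ne', one_smul]
  have hTbar_pos : 0 < Tbar := hTbar ▸ gs_temperature_pos hKB hm hn hν hT hmean
  have hMx_eq : ∀ v a b, Mx v a b = maxwellian a b v := fun v a b => by
    simp [hMx, maxwellian]
  calc ∑ s, (∫ v, (m s * (ν s * (n s * Mx v ubar (KB * Tbar / m s) - f s v))) • v)
      = ∑ s, (ν s * m s * n s) • (ubar - u s) := sum_congr rfl fun s _ => by
        have hb : 0 < KB * Tbar / m s := by have := hm s; positivity
        simp only [hMx_eq]
        rw [integral_relaxation_smul (integrable_maxwellian_smul hb ubar) (hfvint s),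
          integral_maxwellian_smul hb, hf1 s]
        module
    _ = 0 := by simp only [smul_sub, sum_sub_distrib, ← sum_smul, hmean, sub_self]

theorem gs_total_momentum_conservation
    (L : ℕ) (hL : 1 ≤ L) (KB : ℝ) (hKB : 0 < KB)
    (m n ν T : Fin L → ℝ) (u : Fin L → EuclideanSpace ℝ (Fin 3))
    (hm : ∀ s, 0 < m s) (hn : ∀ s, 0 < n s) (hν : ∀ s, 0 < ν s) (hT : ∀ s, 0 < T s)
    (f : Fin L → EuclideanSpace ℝ (Fin 3) → ℝ)
    (hfint : ∀ s, Integrable (f s))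
    (hfvint : ∀ s, Integrable (fun v => f s v • v))
    (hf0 : ∀ s, ∫ v, f s v = n s)
    (hf1 : ∀ s, (∫ v, f s v • v) = n s • u s)
    (Mx : EuclideanSpace ℝ (Fin 3) → EuclideanSpace ℝ (Fin 3) → ℝ → ℝ)
    (hMx : ∀ v a b, Mx v a b = (2 * Real.pi * b) ^ (-(3 : ℝ) / 2)
      * Real.exp (-‖v - a‖ ^ 2 / (2 * b)))
    (ubar : EuclideanSpace ℝ (Fin 3))
    (hubar : ubar = (1 / ∑ s, ν s * m s * n s) • ∑ s, (ν s * m s * n s) • u s)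
    (Tbar : ℝ)
    (hTbar : Tbar = (∑ s, ν s * n s * (m s * (‖u s‖ ^ 2 - ‖ubar‖ ^ 2) + 3 * KB * T s))
      / (3 * KB * ∑ s, ν s * n s)) :
    ∑ s, (∫ v, (m s * (ν s * (n s * Mx v ubar (KB * Tbar / m s) - f s v))) • v)
      = (0 : EuclideanSpace ℝ (Fin 3)) :=
  gs_total_momentum_conservation_general L hL KB hKB m n ν T u hm hn hν hT f hfvint hf1 Mx hMx ubar
    hubar Tbar hTbar
end

section
/- Let K_B > 0, m₂ > 0, u₁, u₂ ∈ ℝ³, T₁, T₂ > 0, and v ∈ ℝ³ be fixed, and for r > 0 set m₁ = m₂/r, a₂₁(r) = 1/(1+r), b₂₁(r) = 2r/(1+r)², γ₂₁(r) = m₂/(3(1+r)²), u₂₁(r) = (1−a₂₁(r)) u₂ + a₂₁(r) u₁, T₂₁(r) = (1−b₂₁(r)) T₂ + b₂₁(r) T₁ + (γ₂₁(r)/K_B)|u₁−u₂|², and M(v;a,b) = (2πb)^{−3/2} exp(−|v−a|²/(2b)). Then as r → 0⁺, M(v; u₂₁(r), K_B T₂₁(r)/m₂) → M(v; u₁, K_B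 T₂/m₂ + |u₁−u₂|²/3); that is, in the light-mass limit the light-species cross Maxwellian M₂₁ tends to a Maxwellian centered at the heavy gas's velocity u₁ with variance parameter K_B T₂/m₂ + (1/3)|u₁−u₂|². -/
/-!
As `r → 0`, the mixing weight `a₂₁ = 1/(1+r)` tends to `1`, the temperature weight
`b₂₁ = 2r/(1+r)²` to `0` and `γ₂₁ = m₂/(3(1+r)²)` to `m₂/3`. Hence `u₂₁ → u₁` and
`K_B T₂₁/m₂ → K_B T₂/m₂ + |u₁ - u₂|²/3 > 0`, and the Maxwellian is jointly continuous in
its mean and its (positive) variance parameter.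
-/

open Filter Topology

theorem tendsto_maxwellian {α E : Type*} [SeminormedAddCommGroup E] {l : Filter α}
    (p : ℝ) (w : E) {c : α → E} {d : α → ℝ} {c₀ : E} {d₀ : ℝ}
    (hc : Tendsto c l (𝓝 c₀)) (hd : Tendsto d l (𝓝 d₀)) (hd₀ : d₀ ≠ 0) :
    Tendsto (fun x => (2 * Real.pi * d x) ^ p * Real.exp (-‖w - c x‖ ^ 2 / (2 * d x))) l
      (𝓝 ((2 * Real.pi * d₀) ^ p * Real.exp (-‖w - c₀‖ ^ 2 / (2 * d₀)))) := by
  have hbase : 2 * Real.pi * d₀ ≠ 0 := by positivity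
  have hexp : Tendsto (fun x => -‖w - c x‖ ^ 2 / (2 * d x)) l (𝓝 (-‖w - c₀‖ ^ 2 / (2 * d₀))) :=
    ((tendsto_const_nhds.sub hc).norm.pow 2).neg.div (hd.const_mul 2) (by positivity)
  exact ((hd.const_mul _).rpow_const (Or.inl hbase)).mul
    ((Real.continuous_exp.tendsto _).comp hexp)

theorem tendsto_light_mass_cross_velocity {E : Type*} [SeminormedAddCommGroup E]
    [NormedSpace ℝ E] (u₁ u₂ : E) :
    Tendsto (fun r : ℝ => (1 - 1 / (1 + r)) • u₂ + (1 / (1 + r)) • u₁) (𝓝 0) (𝓝 u₁) := by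
  have hcont : ContinuousAt (fun r : ℝ => (1 - 1 / (1 + r)) • u₂ + (1 / (1 + r)) • u₁) 0 := by
    fun_prop (disch := norm_num)
  simpa using hcont.tendsto

theorem tendsto_light_mass_cross_temperature (KB m₂ T₁ T₂ q : ℝ) :
    Tendsto (fun r : ℝ => (1 - 2 * r / (1 + r) ^ 2) * T₂ + 2 * r / (1 + r) ^ 2 * T₁
      + m₂ / (3 * (1 + r) ^ 2) / KB * q) (𝓝 0) (𝓝 (T₂ + m₂ / 3 / KB * q)) := by
  have hcont : ContinuousAt (fun r : ℝ => (1 - 2 * r / (1 + r) ^ 2) * T₂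
      + 2 * r / (1 + r) ^ 2 * T₁ + m₂ / (3 * (1 + r) ^ 2) / KB * q) 0 := by
    fun_prop (disch := norm_num)
  simpa using hcont.tendsto

theorem bbgsp_light_cross_maxwellian_light_mass_limit_general
    (KB m2 : ℝ) (hKB : 0 < KB) (hm2 : 0 < m2)
    (u1 u2 : EuclideanSpace ℝ (Fin 3)) (T1 T2 : ℝ) (hT2 : 0 < T2)
    (v : EuclideanSpace ℝ (Fin 3))
    (Mx : EuclideanSpace ℝ (Fin 3) → EuclideanSpace ℝ (Fin 3) → ℝ → ℝ)
    (hMx : ∀ w c d, Mx w c d = (2 * Real.pi * d) ^ (-(3 : ℝ) / 2)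
      * Real.exp (-‖w - c‖ ^ 2 / (2 * d)))
    (a21 b21 γ21 : ℝ → ℝ) (u21 : ℝ → EuclideanSpace ℝ (Fin 3)) (T21 : ℝ → ℝ)
    (ha21 : ∀ r, a21 r = 1 / (1 + r))
    (hb21 : ∀ r, b21 r = 2 * r / (1 + r) ^ 2)
    (hγ21 : ∀ r, γ21 r = m2 / (3 * (1 + r) ^ 2))
    (hu21 : ∀ r, u21 r = (1 - a21 r) • u2 + a21 r • u1)
    (hT21 : ∀ r, T21 r = (1 - b21 r) * T2 + b21 r * T1 + γ21 r / KB * ‖u1 - u2‖ ^ 2) :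
    Tendsto (fun r : ℝ => Mx v (u21 r) (KB * T21 r / m2)) (𝓝[>] 0)
      (𝓝 (Mx v u1 (KB * T2 / m2 + ‖u1 - u2‖ ^ 2 / 3))) := by
  have hu : Tendsto u21 (𝓝 0) (𝓝 u1) := by
    simpa only [funext hu21, ha21] using tendsto_light_mass_cross_velocity u1 u2
  have hT : Tendsto (fun r => KB * T21 r / m2) (𝓝 0)
      (𝓝 (KB * T2 / m2 + ‖u1 - u2‖ ^ 2 / 3)) := by
    have hlim : KB * (T2 + m2 / 3 / KB * ‖u1 - u2‖ ^ 2) / m2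
        = KB * T2 / m2 + ‖u1 - u2‖ ^ 2 / 3 := by
      field_simp
    rw [← hlim]
    simpa only [hT21, hb21, hγ21] using
      ((tendsto_light_mass_cross_temperature KB m2 T1 T2 (‖u1 - u2‖ ^ 2)).const_mul KB).div_const
        m2
  simp only [hMx]
  exact (tendsto_maxwellian _ v hu hT (by positivity)).mono_left nhdsWithin_le_nhds

theorem bbgsp_light_cross_maxwellian_light_mass_limit
    (KB m2 : ℝ) (hKB : 0 < KB) (hm2 : 0 < m2)
    (u1 u2 : EuclideanSpace ℝ (Fin 3)) (T1 T2 : ℝ) (hT1 : 0 < T1) (hT2 : 0 < T2)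
    (v : EuclideanSpace ℝ (Fin 3))
    (Mx : EuclideanSpace ℝ (Fin 3) → EuclideanSpace ℝ (Fin 3) → ℝ → ℝ)
    (hMx : ∀ w c d, Mx w c d = (2 * Real.pi * d) ^ (-(3 : ℝ) / 2)
      * Real.exp (-‖w - c‖ ^ 2 / (2 * d)))
    (a21 b21 γ21 : ℝ → ℝ) (u21 : ℝ → EuclideanSpace ℝ (Fin 3)) (T21 : ℝ → ℝ)
    (ha21 : ∀ r, a21 r = 1 / (1 + r))
    (hb21 : ∀ r, b21 r = 2 * r / (1 + r) ^ 2)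
    (hγ21 : ∀ r, γ21 r = m2 / (3 * (1 + r) ^ 2))
    (hu21 : ∀ r, u21 r = (1 - a21 r) • u2 + a21 r • u1)
    (hT21 : ∀ r, T21 r = (1 - b21 r) * T2 + b21 r * T1 + γ21 r / KB * ‖u1 - u2‖ ^ 2) :
    Tendsto (fun r : ℝ => Mx v (u21 r) (KB * T21 r / m2)) (𝓝[>] 0)
      (𝓝 (Mx v u1 (KB * T2 / m2 + ‖u1 - u2‖ ^ 2 / 3))) :=
  bbgsp_light_cross_maxwellian_light_mass_limit_general KB m2 hKB hm2 u1 u2 T1 T2 hT2 v Mx hMx a21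
    b21 γ21 u21 T21 ha21 hb21 hγ21 hu21 hT21
end

section
/- Let L ≥ 1, K_B > 0, and for s,k ∈ {1,…,L} let m_s > 0, n_s > 0, u_s ∈ ℝ³, T_s > 0, and λ_{sk} > 0 with λ_{sk} = λ_{ks}. Set ν_s = Σ_k λ_{sk} n_k, and define the AAP auxiliary parameters u^s = u_s + (1/(m_s n_s ν_s)) Σ_k ξ^{sk} u_k with ξ^{sk} = λ_{sk} m_s m_k n_s n_k/(m_s+m_k) − δ_{sk} Σ_r λ_{sr} m_s m_r n_s n_r/(m_s+m_r), and T^s = T_s − (m_s/(3K_B))(|u^s|² − |u_s|²) + (2/(3 n_s K_B ν_s)) Σ_k γ^{sk} T_k + (2/(3 n_s K_B ν_s)) Σ_k λ_{sk} (m_s m_k n_s n_k/(m_s+m_k)²)(m_s u_s + m_k u_k)·(u_k − u_s), where γ^{sk} = 3K_B λ_{sk} m_s m_k n_s n_k/(m_s+m_k)² − δ_{sk} Σ_r 3K_B λ_{sr} m_s m_r n_s n_r/(m_s+m_r)². Then for every s, T^s > 0. -/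
open scoped BigOperators
open RealInnerProductSpace

set_option maxHeartbeats 1000000

theorem aap_auxiliary_temperature_positive
    (L : ℕ) (hL : 1 ≤ L) (KB : ℝ) (hKB : 0 < KB)
    (m n T : Fin L → ℝ) (u : Fin L → EuclideanSpace ℝ (Fin 3))
    (lam : Fin L → Fin L → ℝ)
    (hm : ∀ s, 0 < m s) (hn : ∀ s, 0 < n s) (hT : ∀ s, 0 < T s)
    (hlam : ∀ s k, 0 < lam s k) (hlamsym : ∀ s k, lam s k = lam k s)
    (νs : Fin L → ℝ) (hνs : ∀ s, νs s = ∑ k, lam s k * n k)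
    (ξ : Fin L → Fin L → ℝ)
    (hξ : ∀ s k, ξ s k = lam s k * m s * m k * n s * n k / (m s + m k)
      - (if s = k then ∑ r, lam s r * m s * m r * n s * n r / (m s + m r) else 0))
    (uAAP : Fin L → EuclideanSpace ℝ (Fin 3))
    (huAAP : ∀ s, uAAP s = u s + (1 / (m s * n s * νs s)) • ∑ k, ξ s k • u k)
    (γA : Fin L → Fin L → ℝ)
    (hγA : ∀ s k, γA s k = 3 * KB * lam s k * m s * m k * n s * n k / (m s + m k) ^ 2
      - (if s = k then ∑ r, 3 * KB * lam s r * m s * m r * n s * n r / (m s + m r) ^ 2 else 0))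
    (TAAP : Fin L → ℝ)
    (hTAAP : ∀ s, TAAP s = T s - m s / (3 * KB) * (‖uAAP s‖ ^ 2 - ‖u s‖ ^ 2)
      + 2 / (3 * n s * KB * νs s) * ∑ k, γA s k * T k
      + 2 / (3 * n s * KB * νs s) * ∑ k, lam s k * (m s * m k * n s * n k / (m s + m k) ^ 2)
          * ⟪m s • u s + m k • u k, u k - u s⟫) :
    ∀ s, 0 < TAAP s := by
  intro s
  have hms := hm s
  have hns := hn s
  have hne : (Finset.univ : Finset (Fin L)).Nonempty :=
    Finset.univ_nonempty_iff.mpr (Fin.pos_iff_nonempty.mp hL)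
  have hν : 0 < νs s := by
    rw [hνs]
    exact Finset.sum_pos (fun k _ => mul_pos (hlam s k) (hn k)) hne
  have hmk : ∀ k, 0 < m s + m k := fun k => add_pos hms (hm k)
  set a : Fin L → ℝ := fun k => lam s k * m k * n k / ((m s + m k) * νs s) with ha
  set b : Fin L → ℝ := fun k => 2 * lam s k * m s * m k * n k / ((m s + m k) ^ 2 * νs s) with hb
  set c : Fin L → ℝ := fun k => lam s k * n k / (2 * νs s) with hc
  set v : Fin L → EuclideanSpace ℝ (Fin 3) := fun k => u k - u s with hv
  set w : EuclideanSpace ℝ (Fin 3) := ∑ k, a k • v k with hw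
  have hbpos : ∀ k, 0 < b k := fun k => by
    rw [hb]
    exact div_pos
      (mul_pos (mul_pos (mul_pos (mul_pos two_pos (hlam s k)) hms) (hm k)) (hn k))
      (mul_pos (pow_pos (hmk k) 2) hν)
  have hapos : ∀ k, 0 ≤ a k := fun k => by
    rw [ha]
    exact le_of_lt (div_pos (mul_pos (mul_pos (hlam s k) (hm k)) (hn k))
      (mul_pos (hmk k) hν))
  have hcpos : ∀ k, 0 < c k := fun k => by
    rw [hc]
    exact div_pos (mul_pos (hlam s k) (hn k)) (by linarith)
  -- step 1 : the shifted velocity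
  have e0 : ∑ k, ξ s k • u k
      = ∑ k, (lam s k * m s * m k * n s * n k / (m s + m k)) • v k := by
    simp only [hξ, sub_smul, ite_smul, zero_smul, hv, smul_sub]
    rw [Finset.sum_sub_distrib, Finset.sum_sub_distrib, Finset.sum_ite_eq,
      if_pos (Finset.mem_univ s), Finset.sum_smul]
  have e1 : uAAP s = u s + w := by
    rw [huAAP s, e0, hw, Finset.smul_sum]
    congr 1
    refine Finset.sum_congr rfl fun k _ => ?_
    rw [smul_smul]
    congr 1
    rw [ha]
    field_simp [hms.ne', hns.ne', hν.ne', (hmk k).ne']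
  have e2 : ‖uAAP s‖ ^ 2 - ‖u s‖ ^ 2 = 2 * ⟪u s, w⟫ + ‖w‖ ^ 2 := by
    rw [e1, norm_add_sq_real]; ring
  have e3 : ⟪u s, w⟫ = ∑ k, a k * ⟪u s, v k⟫ := by
    rw [hw, inner_sum]
    simp only [real_inner_smul_right]
  have e4 : ∀ k, ⟪m s • u s + m k • u k, u k - u s⟫
      = (m s + m k) * ⟪u s, v k⟫ + m k * ‖v k‖ ^ 2 := by
    intro k
    have h1 : m s • u s + m k • u k = (m s + m k) • u s + m k • v k := by
      simp only [hv]; module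
    have h2 : u k - u s = v k := by simp [hv]
    rw [h1, h2, inner_add_left, real_inner_smul_left, real_inner_smul_left,
      real_inner_self_eq_norm_sq]
  have e5 : ∑ k, γA s k * T k
      = ∑ k, (3 * KB * lam s k * m s * m k * n s * n k / (m s + m k) ^ 2) * (T k - T s) := by
    simp only [hγA, sub_mul, ite_mul, zero_mul, mul_sub]
    rw [Finset.sum_sub_distrib, Finset.sum_sub_distrib, Finset.sum_ite_eq,
      if_pos (Finset.mem_univ s), Finset.sum_mul]
  -- the per-species algebraic identity
  have hper : ∑ k, (2 / (3 * n s * KB * νs s)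
        * ((3 * KB * lam s k * m s * m k * n s * n k / (m s + m k) ^ 2) * (T k - T s))
      + 2 / (3 * n s * KB * νs s)
        * (lam s k * (m s * m k * n s * n k / (m s + m k) ^ 2)
          * ((m s + m k) * ⟪u s, v k⟫ + m k * ‖v k‖ ^ 2))
      - m s / (3 * KB) * (2 * (a k * ⟪u s, v k⟫)))
      = ∑ k, (b k * (T k - T s) + b k * m k * ‖v k‖ ^ 2 / (3 * KB)) := by
    refine Finset.sum_congr rfl fun k _ => ?_
    rw [ha, hb]
    field_simp [hKB.ne', hms.ne', hns.ne', hν.ne', (hmk k).ne']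
    ring
  rw [Finset.sum_sub_distrib, Finset.sum_add_distrib, ← Finset.mul_sum, ← Finset.mul_sum,
    ← Finset.mul_sum, ← Finset.mul_sum] at hper
  have h0 := hTAAP s
  rw [e2, e3, e5] at h0
  simp only [e4] at h0
  have key : TAAP s = T s - m s / (3 * KB) * ‖w‖ ^ 2
      + ∑ k, (b k * (T k - T s) + b k * m k * ‖v k‖ ^ 2 / (3 * KB)) := by
    rw [h0]
    linear_combination hper
  -- split the sum
  have hsplit : ∑ k, (b k * (T k - T s) + b k * m k * ‖v k‖ ^ 2 / (3 * KB))
      = (∑ k, b k * (T k - T s)) + (∑ k, b k * m k * ‖v k‖ ^ 2) / (3 * KB) := by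
    rw [Finset.sum_add_distrib, Finset.sum_div]
  -- bound on ∑ b
  have hbk : ∀ k, b k ≤ lam s k * n k / (2 * νs s) := by
    intro k
    rw [hb, div_le_div_iff₀ (mul_pos (pow_pos (hmk k) 2) hν) (by linarith)]
    nlinarith [sq_nonneg (m s - m k), mul_nonneg (mul_nonneg (hlam s k).le (hn k).le) hν.le,
      hm s, hm k]
  have hcsum : ∑ k, lam s k * n k / (2 * νs s) = 1 / 2 := by
    rw [← Finset.sum_div, ← hνs, div_eq_iff (by linarith : (2 : ℝ) * νs s ≠ 0)]
    ring
  have hb2 : ∑ k, b k ≤ 1 / 2 :=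
    (Finset.sum_le_sum fun k _ => hbk k).trans_eq hcsum
  -- the Cauchy-Schwarz bound : m s * ‖w‖² ≤ ∑ b k m k ‖v k‖²
  have hn1 : ‖w‖ ≤ ∑ k, a k * ‖v k‖ := by
    rw [hw]
    refine (norm_sum_le _ _).trans_eq ?_
    refine Finset.sum_congr rfl fun k _ => ?_
    rw [norm_smul, Real.norm_of_nonneg (hapos k)]
  have hsq : ‖w‖ ^ 2 ≤ (∑ k, a k * ‖v k‖) ^ 2 :=
    pow_le_pow_left₀ (norm_nonneg _) hn1 2
  have hterm : ∀ k, (a k * ‖v k‖) ^ 2 / c k = b k * m k * ‖v k‖ ^ 2 / m s := by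
    intro k
    rw [ha, hb, hc]
    field_simp [hms.ne', (hn k).ne', (hlam s k).ne', hν.ne', (hmk k).ne']
  have hcs := Finset.sq_sum_div_le_sum_sq_div Finset.univ (fun k => a k * ‖v k‖)
    (fun k _ => hcpos k)
  have hcsum' : ∑ k, c k = 1 / 2 := by
    rw [hc] at *
    exact hcsum
  rw [hcsum'] at hcs
  simp only [hterm] at hcs
  rw [← Finset.sum_div] at hcs
  -- hcs : (∑ a‖v‖)^2 / (1/2) ≤ (∑ b m ‖v‖²) / m s
  have hcs2 : 2 * (∑ k, a k * ‖v k‖) ^ 2 ≤ (∑ k, b k * m k * ‖v k‖ ^ 2) / m s := by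
    have : (∑ k, a k * ‖v k‖) ^ 2 / (1 / 2) = 2 * (∑ k, a k * ‖v k‖) ^ 2 := by ring
    linarith [this ▸ hcs]
  have hcs3 : 2 * (∑ k, a k * ‖v k‖) ^ 2 * m s ≤ ∑ k, b k * m k * ‖v k‖ ^ 2 :=
    (le_div_iff₀ hms).mp hcs2
  have hQ : m s * ‖w‖ ^ 2 ≤ ∑ k, b k * m k * ‖v k‖ ^ 2 := by
    have h1 : m s * ‖w‖ ^ 2 ≤ m s * (∑ k, a k * ‖v k‖) ^ 2 :=
      mul_le_mul_of_nonneg_left hsq hms.le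
    nlinarith [sq_nonneg (∑ k, a k * ‖v k‖)]
  -- final assembly
  have hA1 : (∑ k, b k) * T s ≤ 1 / 2 * T s :=
    mul_le_mul_of_nonneg_right hb2 (hT s).le
  have hA2 : -((∑ k, b k) * T s) ≤ ∑ k, b k * (T k - T s) := by
    have step : ∑ k, -(b k * T s) ≤ ∑ k, b k * (T k - T s) :=
      Finset.sum_le_sum fun k _ => by nlinarith [hbpos k, hT k]
    have step2 : ∑ k, -(b k * T s) = -((∑ k, b k) * T s) := by
      rw [Finset.sum_neg_distrib, Finset.sum_mul]
    linarith [step2 ▸ step]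
  have h3KB : (0 : ℝ) < 3 * KB := by linarith
  have hA3 : m s * ‖w‖ ^ 2 / (3 * KB) ≤ (∑ k, b k * m k * ‖v k‖ ^ 2) / (3 * KB) :=
    (div_le_div_iff_of_pos_right h3KB).mpr hQ
  have hA4 : m s / (3 * KB) * ‖w‖ ^ 2 = m s * ‖w‖ ^ 2 / (3 * KB) := by ring
  rw [key, hsplit]
  linarith [hT s]
end
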